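/- With the construction below: if there is no index j ∈ {1,…,n} with α_j = β_j = 1, then ED(x1 ∘ x2, y) ≥ 7n − 2. -/

import Mathlib

open List

/- `levenshtein` and `Levenshtein.defaultCost` were removed from Mathlib; they are
restored here with their old definitions (Mathlib.Data.List.EditDistance.Defs). -/
structure Levenshtein.Cost (α β δ : Type*) where
  delete : α → δ
  insert : β → δ
  substitute : α → β → δ

def Levenshtein.defaultCost {α : Type*} [DecidableEq α] : Levenshtein.Cost α α ℕ where
  delete _ := 1
  insert _ := 1
  substitute a b := if a = b then 0 else 1

def Levenshtein.impl {α β δ : Type*} [AddZeroClass δ] [Min δ] (C : Levenshtein.Cost α β δ)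
    (xs : List α) (y : β) (d : {r : List δ // 0 < r.length}) :
    {r : List δ // 0 < r.length} :=
  let ⟨ds, w⟩ := d
  xs.zip (ds.zip ds.tail) |>.foldr
    (init := ⟨[C.insert y + ds.getLast (List.length_pos_iff.mp w)], by simp⟩)
    (fun ⟨x, d₀, d₁⟩ ⟨r, w⟩ =>
      ⟨min (C.delete x + r[0]) (min (C.insert y + d₀) (C.substitute x y + d₁)) :: r, by simp⟩)

def suffixLevenshtein {α β δ : Type*} [AddZeroClass δ] [Min δ] (C : Levenshtein.Cost α β δ)
    (xs : List α) (ys : List β) : {r : List δ // 0 < r.length} :=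
  ys.foldr
    (Levenshtein.impl C xs)
    (xs.foldr (init := ⟨[0], by simp⟩) (fun a ⟨r, w⟩ => ⟨(C.delete a + r[0]) :: r, by simp⟩))

def levenshtein {α β δ : Type*} [AddZeroClass δ] [Min δ] (C : Levenshtein.Cost α β δ)
    (xs : List α) (ys : List β) : δ :=
  let ⟨r, _⟩ := suffixLevenshtein C xs ys
  r[0]

/-- Edit distance: minimum number of single-symbol insertions, deletions and
substitutions needed to transform `u` into `v` (Levenshtein distance with unit costs). -/
def ED {α : Type*} [DecidableEq α] (u v : List α) : ℕ :=
  levenshtein Levenshtein.defaultCost u v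

/- The alphabet `{1,…,6n} ∪ {a}` is modelled inside `ℕ`, with the special symbol `a := 0`
(distinct from all the integer symbols `1,…,6n`).  Indices of `α, β ∈ {0,1}^n` are
`0`-based: `α_j` (`1 ≤ j ≤ n`) is `a (j-1)`. -/

/-- `α' ∈ {0,1}^{2n}` (0-based): `α'_{2j−1} = α_j`, `α'_{2j} = 1 − α_j`. -/
def alphaP (a : ℕ → Bool) (j : ℕ) : Bool :=
  if j % 2 = 0 then a (j / 2) else !a (j / 2)

/-- `β' ∈ {0,1}^{2n}` (0-based): `β'_{2j−1} = 1 − β_j`, `β'_{2j} = β_j`. -/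
def betaP (b : ℕ → Bool) (j : ℕ) : Bool :=
  if j % 2 = 0 then !b (j / 2) else b (j / 2)

/-- `x1 ∈ Σ^{4n}` : for `j ∈ {1,…,2n}`, the `(2j−1)`-th symbol is `3j−2` and the `(2j)`-th
symbol is `3j−1` if `α'_j = 1`, and `a` (here `0`) otherwise. -/
def x1 (n : ℕ) (a : ℕ → Bool) : List ℕ :=
  ((List.range (2 * n)).map fun j =>
    [3 * (j + 1) - 2, if alphaP a j then 3 * (j + 1) - 1 else 0]).flatten

/-- `x2 ∈ Σ^{4n}` : for `j ∈ {1,…,2n}`, the `(2j−1)`-th symbol is `3j−1` if `β'_j = 1`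
(and `a`, here `0`, otherwise), and the `(2j)`-th symbol is `3j`. -/
def x2 (n : ℕ) (b : ℕ → Bool) : List ℕ :=
  ((List.range (2 * n)).map fun j =>
    [if betaP b j then 3 * (j + 1) - 1 else 0, 3 * (j + 1)]).flatten

/-- `y = (1, 2, …, 6n)`. -/
def ystr (n : ℕ) : List ℕ := List.range' 1 (6 * n)

/-!
An optimal alignment of `x1 ∘ x2` with `y = [1, 6n+1)` aligns `x1` with some prefix `[1, d)` and
`x2` with the suffix `[d, 6n+1)`. Both strings are concatenations of `2n` pairs, each made of a fixed
symbol and an optional one (`3j-1` or `a`); aligned against consecutive intervals, every pair costs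
at least `2` (since `max(|u|, |v|) ≤ ED(u, v) + #{matched symbols}`), up to a 0/1 potential
(has the interval already passed the fixed symbol?) that telescopes along the string, and a
bonus of `1` when its optional symbol is present and lies in the interval. For `x1` this needs
`3j-1 < d`, for `x2` it needs `d ≤ 3j-1`; the complementary patterns of `α'` and `β'` allow at most
one such bonus per index `j ≤ n` unless `α_j = β_j = 1`. With `h₁ + h₂ ≤ n` bonuses in total,
`ED ≥ (4n - 1 - h₁) + (4n - 1 - h₂) ≥ 7n - 2`.
-/

section Levenshtein

variable {α β δ : Type*} [AddZeroClass δ] [Min δ] (C : Levenshtein.Cost α β δ)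

theorem Levenshtein.impl_cons (x : α) (xs : List α) (y : β) (d : δ) (ds : List δ)
    (w : 0 < (d :: ds).length) (w' : 0 < ds.length) :
    Levenshtein.impl C (x :: xs) y ⟨d :: ds, w⟩ =
      let r := Levenshtein.impl C xs y ⟨ds, w'⟩
      ⟨min (C.delete x + r.1[0]'r.2) (min (C.insert y + d) (C.substitute x y + ds[0])) :: r.1,
        by simp⟩ :=
  match ds, w' with | _ :: _, _ => rfl

theorem exists_suffixLevenshtein_cons₁ (x : α) (xs : List α) (ys : List β) :
    ∃ d, (suffixLevenshtein C (x :: xs) ys).1 = d :: (suffixLevenshtein C xs ys).1 := by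
  induction ys with
  | nil => exact ⟨_, rfl⟩
  | cons y ys ih =>
    obtain ⟨d, hd⟩ := ih
    have e : suffixLevenshtein C (x :: xs) ys = ⟨d :: (suffixLevenshtein C xs ys).1, by simp⟩ :=
      Subtype.ext hd
    rw [show suffixLevenshtein C (x :: xs) (y :: ys)
      = Levenshtein.impl C (x :: xs) y (suffixLevenshtein C (x :: xs) ys) from rfl, e,
      Levenshtein.impl_cons (w' := (suffixLevenshtein C xs ys).2)]
    exact ⟨_, rfl⟩

theorem exists_suffixLevenshtein_nil₁ (ys : List β) :
    ∃ d, (suffixLevenshtein C ([] : List α) ys).1 = [d] := by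
  cases ys <;> exact ⟨_, rfl⟩

theorem levenshtein_eq_head (xs : List α) (ys : List β) :
    levenshtein C xs ys = (suffixLevenshtein C xs ys).1[0]'(suffixLevenshtein C xs ys).2 := rfl

theorem levenshtein_cons_nil (x : α) (xs : List α) :
    levenshtein C (x :: xs) ([] : List β) = C.delete x + levenshtein C xs [] := rfl

theorem levenshtein_nil_cons (y : β) (ys : List β) :
    levenshtein C ([] : List α) (y :: ys) = C.insert y + levenshtein C [] ys := by
  obtain ⟨d, hd⟩ := exists_suffixLevenshtein_nil₁ C (α := α) ys
  have hlast : levenshtein C ([] : List α) (y :: ys) = C.insert y +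
      (suffixLevenshtein C ([] : List α) ys).1.getLast
        (List.length_pos_iff.mp (suffixLevenshtein C ([] : List α) ys).2) := rfl
  rw [hlast, levenshtein_eq_head]
  simp [hd]

theorem levenshtein_cons_cons (x : α) (xs : List α) (y : β) (ys : List β) :
    levenshtein C (x :: xs) (y :: ys) =
      min (C.delete x + levenshtein C xs (y :: ys))
        (min (C.insert y + levenshtein C (x :: xs) ys) (C.substitute x y + levenshtein C xs ys)) := by
  obtain ⟨d, hd⟩ := exists_suffixLevenshtein_cons₁ C x xs ys
  have e : suffixLevenshtein C (x :: xs) ys = ⟨d :: (suffixLevenshtein C xs ys).1, by simp⟩ :=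
    Subtype.ext hd
  have hd₀ : levenshtein C (x :: xs) ys = d := by rw [levenshtein_eq_head]; simp [hd]
  rw [hd₀, levenshtein_eq_head C (x :: xs), show suffixLevenshtein C (x :: xs) (y :: ys)
      = Levenshtein.impl C (x :: xs) y (suffixLevenshtein C (x :: xs) ys) from rfl, e,
      Levenshtein.impl_cons (w' := (suffixLevenshtein C xs ys).2)]
  rfl

end Levenshtein

section EditDistance

variable {α : Type*} [DecidableEq α]

@[simp] theorem ED_nil_left (v : List α) : ED [] v = v.length := by
  induction v with
  | nil => rfl
  | cons y ys ih =>
    rw [ED, levenshtein_nil_cons, ← ED, ih]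
    exact add_comm _ _

@[simp] theorem ED_nil_right (u : List α) : ED u [] = u.length := by
  induction u with
  | nil => rfl
  | cons x xs ih =>
    rw [ED, levenshtein_cons_nil, ← ED, ih]
    exact add_comm _ _

theorem ED_cons_cons (x y : α) (u v : List α) :
    ED (x :: u) (y :: v) =
      min (1 + ED u (y :: v)) (min (1 + ED (x :: u) v) ((if x = y then 0 else 1) + ED u v)) :=
  levenshtein_cons_cons _ x u y v

theorem ED_cons_left_le (x : α) (u v : List α) : ED (x :: u) v ≤ 1 + ED u v := by
  cases v with
  | nil => simp [add_comm]
  | cons y v => rw [ED_cons_cons]; exact min_le_left _ _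

theorem exists_append_eq_ED_add_ED_le (u₁ u₂ v : List α) :
    ∃ v₁ v₂, v = v₁ ++ v₂ ∧ ED u₁ v₁ + ED u₂ v₂ ≤ ED (u₁ ++ u₂) v := by
  induction v generalizing u₁ with
  | nil => exact ⟨[], [], rfl, by simp⟩
  | cons y ys ihv =>
    induction u₁ with
    | nil => exact ⟨[], y :: ys, rfl, by simp⟩
    | cons x xs ihu =>
      rw [cons_append, ED_cons_cons]
      rcases min_choice (1 + ED (xs ++ u₂) (y :: ys))
          (min (1 + ED (x :: (xs ++ u₂)) ys) ((if x = y then 0 else 1) + ED (xs ++ u₂) ys))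
        with h | h <;> rw [h]
      · obtain ⟨v₁, v₂, hv, hle⟩ := ihu
        exact ⟨v₁, v₂, hv, by have := ED_cons_left_le x xs v₁; omega⟩
      rcases min_choice (1 + ED (x :: (xs ++ u₂)) ys) ((if x = y then 0 else 1) + ED (xs ++ u₂) ys)
        with h | h <;> rw [h]
      · obtain ⟨v₁, v₂, rfl, hle⟩ := ihv (x :: xs)
        refine ⟨y :: v₁, v₂, rfl, ?_⟩
        rw [cons_append] at hle
        have : ED (x :: xs) (y :: v₁) ≤ 1 + ED (x :: xs) v₁ := by
          rw [ED_cons_cons]; exact (min_le_right _ _).trans (min_le_left _ _)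
        omega
      · obtain ⟨v₁, v₂, rfl, hle⟩ := ihv xs
        refine ⟨y :: v₁, v₂, rfl, ?_⟩
        have : ED (x :: xs) (y :: v₁) ≤ (if x = y then 0 else 1) + ED xs v₁ := by
          rw [ED_cons_cons]; exact (min_le_right _ _).trans (min_le_right _ _)
        omega

theorem max_length_le_ED_add_countP (u v : List α) :
    max u.length v.length ≤ ED u v + v.countP (· ∈ u) := by
  induction u generalizing v with
  | nil => simp
  | cons x xs ihu =>
    induction v with
    | nil => simp
    | cons y ys ihv =>
      have hmono (l : List α) : l.countP (· ∈ xs) ≤ l.countP (· ∈ x :: xs) :=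
        countP_mono_left fun w _ hw => by simp_all
      have h₁ := ihu (y :: ys)
      have h₂ := hmono (y :: ys)
      have h₃ := ihu ys
      have h₄ := hmono ys
      have h₅ : ys.countP (· ∈ x :: xs) ≤ (y :: ys).countP (· ∈ x :: xs) := by
        simp only [countP_cons]; omega
      rw [ED_cons_cons]
      simp only [length_cons] at *
      split_ifs with hxy
      · have : (y :: ys).countP (· ∈ x :: xs) = ys.countP (· ∈ x :: xs) + 1 := by simp [hxy]
        omega
      · omega

theorem countP_mem_le_countP_mem {u v : List α} (hv : v.Nodup) :
    v.countP (· ∈ u) ≤ u.countP (· ∈ v) := by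
  rw [countP_eq_length_filter, countP_eq_length_filter]
  refine ((hv.filter _).subperm fun w hw => ?_).length_le
  simp only [mem_filter, decide_eq_true_eq] at hw ⊢
  exact ⟨hw.2, hw.1⟩

end EditDistance

theorem two_le_ED_pair_pair {α : Type*} [DecidableEq α] {g₁ g₂ w₁ w₂ : α}
    (h₁ : g₁ ≠ w₁) (h₂ : g₂ ≠ w₂) : 2 ≤ ED [g₁, g₂] [w₁, w₂] := by
  simp only [ED_cons_cons, ED_nil_left, ED_nil_right, length_cons, length_nil, if_neg h₁,
    if_neg h₂]
  split_ifs <;> omega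

theorem max_two_le_ED_pair_Ico (p q s t : ℕ) :
    max 2 (t - s) ≤ ED [p, q] (Ico s t)
      + (if p ∈ Ico s t then 1 else 0) + (if q ∈ Ico s t then 1 else 0) := by
  have hED := max_length_le_ED_add_countP [p, q] (Ico s t)
  have hcount := countP_mem_le_countP_mem (u := [p, q]) (Ico.nodup s t)
  simp only [countP_cons, countP_nil, decide_eq_true_eq] at hcount
  simp only [length_cons, length_nil, Ico.length] at hED
  omega

theorem Ico_add_two (s : ℕ) : Ico s (s + 2) = [s, s + 1] := by
  rw [Ico.eq_cons (by omega), Ico.eq_cons (by omega), Ico.self_empty]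

theorem le_ED_pair_Ico_fixed_fst {g q s t bonus : ℕ} (hq : q ≠ g)
    (hbonus : q ∈ Ico s t → 1 ≤ bonus) :
    2 + (if g + 3 ≤ t then 1 else 0) ≤ ED [g, q] (Ico s t) + bonus + (if g ≤ s then 1 else 0) := by
  have key := max_two_le_ED_pair_Ico g q s t
  have hmis : t = s + 2 → s + 1 = g → 2 ≤ ED [g, q] (Ico s t) := by
    rintro rfl rfl
    rw [Ico_add_two]
    exact two_le_ED_pair_pair (by omega) hq
  have hb : (if q ∈ Ico s t then 1 else 0) ≤ bonus := by
    split_ifs with hmem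
    exacts [hbonus hmem, Nat.zero_le _]
  simp only [Ico.mem] at *
  split_ifs at * <;> omega

theorem le_ED_pair_Ico_fixed_snd {r h s t bonus : ℕ} (hr : r ≠ h)
    (hbonus : r ∈ Ico s t → 1 ≤ bonus) :
    2 + (if h + 2 ≤ t then 1 else 0) ≤
      ED [r, h] (Ico s t) + bonus + (if h ≤ s + 1 then 1 else 0) := by
  have key := max_two_le_ED_pair_Ico r h s t
  have hmis : t = s + 2 → s = h → 2 ≤ ED [r, h] (Ico s t) := by
    rintro rfl rfl
    rw [Ico_add_two]
    exact two_le_ED_pair_pair hr (by omega)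
  have hb : (if r ∈ Ico s t then 1 else 0) ≤ bonus := by
    split_ifs with hmem
    exacts [hbonus hmem, Nat.zero_le _]
  simp only [Ico.mem] at *
  split_ifs at * <;> omega

theorem Ico_eq_append {s c : ℕ} {v₁ v₂ : List ℕ} (hsc : s ≤ c) (h : Ico s c = v₁ ++ v₂) :
    ∃ t, s ≤ t ∧ t ≤ c ∧ v₁ = Ico s t ∧ v₂ = Ico t c := by
  have hlen : c - s = v₁.length + v₂.length := by simpa using congrArg length h
  refine ⟨s + v₁.length, by omega, by omega, ?_⟩
  rw [← Ico.append_consecutive (m := s + v₁.length) (by omega) (by omega)] at h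
  exact append_inj h.symm (by simp)

theorem le_ED_flatten_Ico {B : ℕ → List ℕ} {φ : ℕ → ℕ → ℕ} {β : ℕ → ℕ} {w s₀ c : ℕ}
    (hB : ∀ m s t, s₀ ≤ s → t ≤ c → w + φ (m + 1) t ≤ ED (B m) (Ico s t) + β m + φ m s)
    (k m s : ℕ) (hs : s₀ ≤ s) (hsc : s ≤ c) :
    w * k ≤ ED ((range' m k).map B).flatten (Ico s c) + ((range' m k).map β).sum + φ m s := by
  induction k generalizing m s with
  | zero => simp
  | succ k ih =>
    obtain ⟨v₁, v₂, hv, hsplit⟩ :=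
      exists_append_eq_ED_add_ED_le (B m) ((range' (m + 1) k).map B).flatten (Ico s c)
    obtain ⟨t, hst, htc, rfl, rfl⟩ := Ico_eq_append hsc hv
    have hfirst := hB m s t hs htc
    have hrest := ih (m + 1) t (hs.trans hst) htc
    simp only [range'_succ, map_cons, flatten_cons, sum_cons, Nat.mul_succ]
    omega

def x1Hit (a : ℕ → Bool) (d j : ℕ) : ℕ :=
  if alphaP a j ∧ 3 * (j + 1) - 1 < d then 1 else 0

def x2Hit (b : ℕ → Bool) (d j : ℕ) : ℕ :=
  if betaP b j ∧ d ≤ 3 * (j + 1) - 1 then 1 else 0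

theorem le_ED_x1 (n : ℕ) (a : ℕ → Bool) {d : ℕ} (hd : 1 ≤ d) :
    2 * (2 * n) ≤ ED (x1 n a) (Ico 1 d) + ((range (2 * n)).map (x1Hit a d)).sum + 1 := by
  have hflat := le_ED_flatten_Ico
    (B := fun j => [3 * (j + 1) - 2, if alphaP a j then 3 * (j + 1) - 1 else 0])
    (φ := fun m s => if 3 * (m + 1) - 2 ≤ s then 1 else 0)
    (β := x1Hit a d) (w := 2) (s₀ := 1) (c := d) ?_ (2 * n) 0 1 le_rfl hd
  · simpa [x1, range_eq_range'] using hflat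
  intro m s t hs ht
  convert le_ED_pair_Ico_fixed_fst (g := 3 * (m + 1) - 2) (s := s) (t := t) ?_ ?_ using 3
  · omega
  · split <;> omega
  · intro hq
    cases hα : alphaP a m <;> rw [hα] at hq
    · simp only [Bool.false_eq_true, if_false, Ico.mem] at hq
      omega
    · rw [if_pos rfl, Ico.mem] at hq
      rw [x1Hit, if_pos ⟨hα, by omega⟩]

theorem le_ED_x2 (n : ℕ) (b : ℕ → Bool) {d : ℕ} (hd₁ : 1 ≤ d) (hd₂ : d ≤ 6 * n + 1) :
    2 * (2 * n) ≤ ED (x2 n b) (Ico d (6 * n + 1)) + ((range (2 * n)).map (x2Hit b d)).sum + 1 := by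
  have hflat := le_ED_flatten_Ico
    (B := fun j => [if betaP b j then 3 * (j + 1) - 1 else 0, 3 * (j + 1)])
    (φ := fun m s => if 3 * (m + 1) ≤ s + 1 then 1 else 0)
    (β := x2Hit b d) (w := 2) (s₀ := d) (c := 6 * n + 1) ?_ (2 * n) 0 d le_rfl hd₂
  · simp only [x2, range_eq_range'] at hflat ⊢
    split_ifs at hflat <;> omega
  intro m s t hs ht
  convert le_ED_pair_Ico_fixed_snd (h := 3 * (m + 1)) (s := s) (t := t) ?_ ?_ using 3
  · omega
  · split <;> omega
  · intro hr
    cases hβ : betaP b m <;> rw [hβ] at hr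
    · simp only [Bool.false_eq_true, if_false, Ico.mem] at hr
      omega
    · rw [if_pos rfl, Ico.mem] at hr
      rw [x2Hit, if_pos ⟨hβ, by omega⟩]

theorem x1Hit_add_x2Hit_le_one (a b : ℕ → Bool) (d N : ℕ) (h : ¬(a N = true ∧ b N = true)) :
    x1Hit a d (2 * N) + x1Hit a d (2 * N + 1) + x2Hit b d (2 * N) + x2Hit b d (2 * N + 1) ≤ 1 := by
  have hα₀ : alphaP a (2 * N) = a N := by simp [alphaP]
  have hα₁ : alphaP a (2 * N + 1) = !a N := by simp [alphaP, Nat.mul_add_div]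
  have hβ₀ : betaP b (2 * N) = !b N := by simp [betaP]
  have hβ₁ : betaP b (2 * N + 1) = b N := by simp [betaP, Nat.mul_add_div]
  simp only [x1Hit, x2Hit, hα₀, hα₁, hβ₀, hβ₁]
  cases ha : a N <;> cases hb : b N <;>
    simp only [ha, hb, Bool.not_true, Bool.not_false, true_and, false_and, Bool.false_eq_true,
      if_false, and_self, not_true_eq_false] at h ⊢ <;>
    split_ifs <;> omega

theorem sum_x1Hit_add_sum_x2Hit_le (a b : ℕ → Bool) (d : ℕ) :
    ∀ n, (∀ j < n, ¬(a j = true ∧ b j = true)) →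
      ((range (2 * n)).map (x1Hit a d)).sum + ((range (2 * n)).map (x2Hit b d)).sum ≤ n
  | 0, _ => by simp
  | n + 1, h => by
    have ih := sum_x1Hit_add_sum_x2Hit_le a b d n fun j hj => h j (by omega)
    have hpair := x1Hit_add_x2Hit_le_one a b d n (h n (by omega))
    rw [show 2 * (n + 1) = 2 * n + 1 + 1 by ring, range_succ, range_succ]
    simp only [map_append, map_cons, map_nil, sum_append, sum_cons, sum_nil]
    omega

theorem stmt6_general (n : ℕ) (a b : ℕ → Bool)
    (h : ∀ j < n, ¬(a j = true ∧ b j = true)) :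
    7 * n - 2 ≤ ED (x1 n a ++ x2 n b) (ystr n) := by
  obtain ⟨v₁, v₂, hv, hsplit⟩ := exists_append_eq_ED_add_ED_le (x1 n a) (x2 n b) (ystr n)
  have hy : ystr n = Ico 1 (6 * n + 1) := by simp [ystr, Ico]
  obtain ⟨d, hd₁, hd₂, rfl, rfl⟩ := Ico_eq_append (by omega) (hy ▸ hv)
  have h₁ := le_ED_x1 n a hd₁
  have h₂ := le_ED_x2 n b hd₁ hd₂
  have hhits := sum_x1Hit_add_sum_x2Hit_le a b d n h
  omega

/-- If there is no index `j ∈ {1,…,n}` with `α_j = β_j = 1`, then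
`ED(x1 ∘ x2, y) ≥ 7n − 2`. -/
theorem stmt6 (n : ℕ) (hn : 0 < n) (a b : ℕ → Bool)
    (h : ∀ j < n, ¬(a j = true ∧ b j = true)) :
    7 * n - 2 ≤ ED (x1 n a ++ x2 n b) (ystr n) :=
  stmt6_general n a b h
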